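/- The in-order-sequence map α from endotrees of size n to endofunctions on [n] is a bijection, with inverse the max-decomposition map β. In particular, |endotrees of size n| = n^n. -/

import Mathlib

inductive LTree where
  | nil : LTree
  | node : LTree → ℕ → LTree → LTree
deriving DecidableEq

namespace LTree

def size : LTree → ℕ
  | nil => 0
  | node L _ R => L.size + 1 + R.size

/-- The in-order sequence of labels. -/
def inorder : LTree → List ℕ
  | nil => []
  | node L r R => L.inorder ++ r :: R.inorder

/-- The maximum label (0 for the empty tree). -/
def maxL : LTree → ℕ
  | nil => 0
  | node L r R => max r (max L.maxL R.maxL)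

/-- Weakly decreasing along every root-to-leaf path. -/
def Decreasing : LTree → Prop
  | nil => True
  | node L r R => L.maxL ≤ r ∧ R.maxL ≤ r ∧ L.Decreasing ∧ R.Decreasing

/-- Strictly decreasing to the left: every label in a left subtree
is strictly smaller than the label of its parent. -/
def StrictLeft : LTree → Prop
  | nil => True
  | node L r R => L.maxL < r ∧ L.StrictLeft ∧ R.StrictLeft

/-- An endotree: decreasing, strictly decreasing to the left, labels in `[n]`. -/
def IsEndotree (T : LTree) : Prop :=
  T.Decreasing ∧ T.StrictLeft ∧ ∀ l ∈ T.inorder, 1 ≤ l ∧ l ≤ T.size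

/-- A regular endotree: the set of labels equals `[k]` for some `k ≤ n`. -/
def IsRegularEndotree (T : LTree) : Prop :=
  T.IsEndotree ∧ ∃ k ≤ T.size, ∀ l, l ∈ T.inorder ↔ (1 ≤ l ∧ l ≤ k)

end LTree

/-- An endofunction on `[n]`, identified with a word of length `n` over `[n]`. -/
def IsEndofun (x : List ℕ) : Prop := ∀ a ∈ x, 1 ≤ a ∧ a ≤ x.length

/-- A Cayley permutation: an endofunction whose image is `[k]` for some `k ≤ n`. -/
def IsCayley (x : List ℕ) : Prop :=
  IsEndofun x ∧ ∃ k ≤ x.length, ∀ j, j ∈ x ↔ (1 ≤ j ∧ j ≤ k)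

theorem foldr_max_mem : ∀ (a : ℕ) (t : List ℕ), (a :: t).foldr max 0 ∈ a :: t := by
  intro a t
  induction t generalizing a with
  | nil => simp
  | cons b t ih =>
    have : (a :: b :: t).foldr max 0 = max a ((b :: t).foldr max 0) := rfl
    rw [this]
    rcases max_choice a ((b :: t).foldr max 0) with h | h
    · rw [h]; exact List.mem_cons_self
    · rw [h]; exact List.mem_cons_of_mem _ (ih b)

/-- The map `β` built recursively from the max-decomposition: the root is the
leftmost occurrence of the maximum, the left (resp. right) subtree is built from
the prefix (resp. suffix). -/
def seqToTree : List ℕ → LTree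
  | [] => LTree.nil
  | a :: t =>
    let x := a :: t
    let m := x.idxOf (x.foldr max 0)
    LTree.node (seqToTree (x.take m)) (x.getD m 0) (seqToTree (x.drop (m + 1)))
termination_by x => x.length
decreasing_by
  · have hm : (a :: t).idxOf ((a :: t).foldr max 0) < (a :: t).length :=
      List.idxOf_lt_length_iff.mpr (foldr_max_mem a t)
    simpa using lt_of_le_of_lt (by simp [List.length_take]) hm
  · simp only [List.length_drop, List.length_cons]
    omega

-- foldr max helpers
lemma foldr_max_eq (b : ℕ) (l : List ℕ) : l.foldr max b = max (l.foldr max 0) b := by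
  induction l with
  | nil => simp
  | cons a l ih => simp [List.foldr_cons, ih, max_assoc]

lemma le_foldr_max {a : ℕ} {l : List ℕ} (h : a ∈ l) : a ≤ l.foldr max 0 := by
  induction l with
  | nil => simp at h
  | cons b l ih =>
    rcases List.mem_cons.mp h with rfl | h
    · exact le_max_left _ _
    · exact le_trans (ih h) (le_max_right _ _)

lemma foldr_max_le {b : ℕ} {l : List ℕ} (h : ∀ a ∈ l, a ≤ b) : l.foldr max 0 ≤ b := by
  induction l with
  | nil => exact Nat.zero_le _
  | cons a l ih => simp only [List.foldr_cons, max_le_iff]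
                   exact ⟨h a (List.mem_cons_self), ih fun a ha => h a (List.mem_cons_of_mem _ ha)⟩

lemma foldr_max_lt {b : ℕ} {l : List ℕ} (hb : 0 < b) (h : ∀ a ∈ l, a < b) : l.foldr max 0 < b := by
  induction l with
  | nil => exact hb
  | cons a l ih => simp only [List.foldr_cons, max_lt_iff]
                   exact ⟨h a (List.mem_cons_self), ih fun a ha => h a (List.mem_cons_of_mem _ ha)⟩

lemma not_mem_take_indexOf (a : ℕ) (l : List ℕ) : a ∉ l.take (l.idxOf a) := by
  induction l with
  | nil => simp
  | cons b l ih =>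
    by_cases h : b = a
    · subst h; simp [List.idxOf_cons_self]
    · rw [List.idxOf_cons_ne _ (by exact fun hh => h hh)]
      simp only [List.take_succ_cons, List.mem_cons]
      rintro (rfl | hm)
      · exact h rfl
      · exact ih hm

namespace LTree

lemma size_eq (T : LTree) : T.size = T.inorder.length := by
  induction T with
  | nil => rfl
  | node L r R ihL ihR => simp [size, inorder, ihL, ihR]; omega

lemma maxL_eq (T : LTree) : T.maxL = T.inorder.foldr max 0 := by
  induction T with
  | nil => rfl
  | node L r R ihL ihR =>
    simp only [maxL, inorder, List.foldr_append, List.foldr_cons]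
    rw [foldr_max_eq, ihL, ihR]
    ac_rfl

lemma mem_le_maxL {a : ℕ} {T : LTree} (h : a ∈ T.inorder) : a ≤ T.maxL := by
  rw [maxL_eq]; exact le_foldr_max h

end LTree

lemma seqToTree_eq (x : List ℕ) (hx : x ≠ []) :
    seqToTree x = LTree.node (seqToTree (x.take (x.idxOf (x.foldr max 0))))
      (x.getD (x.idxOf (x.foldr max 0)) 0)
      (seqToTree (x.drop (x.idxOf (x.foldr max 0) + 1))) := by
  cases x with
  | nil => exact absurd rfl hx
  | cons a t => rw [seqToTree]

lemma indexOf_lt_length' (x : List ℕ) (hx : x ≠ []) :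
    x.idxOf (x.foldr max 0) < x.length := by
  cases x with
  | nil => exact absurd rfl hx
  | cons a t => exact List.idxOf_lt_length_iff.mpr (foldr_max_mem a t)
lemma list_recomb {l : List ℕ} {m : ℕ} (hm : m < l.length) :
    l.take m ++ l.getD m 0 :: l.drop (m + 1) = l := by
  rw [List.getD_eq_getElem l 0 hm, ← List.drop_eq_getElem_cons hm, List.take_append_drop]

lemma inorder_seqToTree (x : List ℕ) : (seqToTree x).inorder = x := by
  induction x using seqToTree.induct with
  | case1 => simp [seqToTree, LTree.inorder]
  | case2 a t x m ih1 ih2 =>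
    rw [seqToTree_eq (a :: t) (by simp)]
    show (seqToTree ((a::t).take m)).inorder ++ (a::t).getD m 0 :: (seqToTree ((a::t).drop (m+1))).inorder = a :: t
    rw [ih1, ih2]
    exact list_recomb (indexOf_lt_length' (a :: t) (by simp))

lemma seqToTree_good (x : List ℕ) (hx : ∀ a ∈ x, 1 ≤ a) :
    (seqToTree x).Decreasing ∧ (seqToTree x).StrictLeft := by
  induction x using seqToTree.induct with
  | case1 => simp [seqToTree, LTree.Decreasing, LTree.StrictLeft]
  | case2 a t x m ih1 ih2 =>
    have hm : m < (a :: t).length := indexOf_lt_length' (a :: t) (by simp)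
    have hMmem : (a :: t).foldr max 0 ∈ a :: t := foldr_max_mem a t
    have hgetD : (a :: t).getD m 0 = (a :: t).foldr max 0 := by
      rw [List.getD_eq_getElem _ _ hm]
      exact List.getElem_idxOf hm
    have hM1 : 1 ≤ (a :: t).foldr max 0 := hx _ hMmem
    have htake : ∀ b ∈ (a :: t).take m, b < (a :: t).foldr max 0 := by
      intro b hb
      have hble : b ≤ (a :: t).foldr max 0 := le_foldr_max (List.mem_of_mem_take hb)
      rcases lt_or_eq_of_le hble with h | h
      · exact h
      · exact absurd (h ▸ hb) (not_mem_take_indexOf _ _)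
    have hdrop : ∀ b ∈ (a :: t).drop (m + 1), b ≤ (a :: t).foldr max 0 := fun b hb =>
      le_foldr_max (List.mem_of_mem_drop hb)
    obtain ⟨hD1, hS1⟩ := ih1 (fun b hb => hx b (List.mem_of_mem_take hb))
    obtain ⟨hD2, hS2⟩ := ih2 (fun b hb => hx b (List.mem_of_mem_drop hb))
    rw [seqToTree_eq (a :: t) (by simp)]
    have hmaxtake : (seqToTree ((a :: t).take m)).maxL < (a :: t).foldr max 0 := by
      rw [LTree.maxL_eq, inorder_seqToTree]
      exact foldr_max_lt hM1 htake
    have hmaxdrop : (seqToTree ((a :: t).drop (m + 1))).maxL ≤ (a :: t).foldr max 0 := by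
      rw [LTree.maxL_eq, inorder_seqToTree]
      exact foldr_max_le hdrop
    refine ⟨⟨?_, ?_, hD1, hD2⟩, ?_, hS1, hS2⟩
    · rw [hgetD]; exact le_of_lt hmaxtake
    · rw [hgetD]; exact hmaxdrop
    · rw [hgetD]; exact hmaxtake

lemma indexOf_append_cons_self {a : ℕ} {l1 l2 : List ℕ} (h : a ∉ l1) :
    (l1 ++ a :: l2).idxOf a = l1.length := by
  induction l1 with
  | nil => simp [List.idxOf_cons_self]
  | cons b l1 ih =>
    have hba : b ≠ a := fun hh => h (hh ▸ List.mem_cons_self)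
    simp only [List.cons_append, List.idxOf_cons_ne _ hba,
      ih (fun hh => h (List.mem_cons_of_mem _ hh)), List.length_cons]

lemma getD_append_cons (a : ℕ) (l1 l2 : List ℕ) :
    (l1 ++ a :: l2).getD l1.length 0 = a := by
  induction l1 with
  | nil => rfl
  | cons b l1 ih => simpa using ih

lemma seqToTree_inorder (T : LTree) (hD : T.Decreasing) (hS : T.StrictLeft) :
    seqToTree T.inorder = T := by
  induction T with
  | nil => simp [LTree.inorder, seqToTree]
  | node L r R ihL ihR =>
    obtain ⟨hLr, hRr, hDL, hDR⟩ := hD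
    obtain ⟨hLr', hSL, hSR⟩ := hS
    have hM : (L.inorder ++ r :: R.inorder).foldr max 0 = r := by
      rw [List.foldr_append, List.foldr_cons, foldr_max_eq, foldr_max_eq, ← LTree.maxL_eq,
        ← LTree.maxL_eq, Nat.max_zero, max_eq_left hRr, max_eq_right (le_of_lt hLr')]
    have hrnotm : r ∉ L.inorder := fun hm => absurd (LTree.mem_le_maxL hm) (not_le.mpr hLr')
    have hidx : (L.inorder ++ r :: R.inorder).idxOf ((L.inorder ++ r :: R.inorder).foldr max 0)
        = L.inorder.length := by rw [hM]; exact indexOf_append_cons_self hrnotm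
    rw [show (L.node r R).inorder = L.inorder ++ r :: R.inorder from rfl,
      seqToTree_eq _ (by simp), hidx]
    have htake : (L.inorder ++ r :: R.inorder).take L.inorder.length = L.inorder :=
      List.take_left
    have hdrop : (L.inorder ++ r :: R.inorder).drop (L.inorder.length + 1) = R.inorder := by
      have : L.inorder ++ r :: R.inorder = (L.inorder ++ [r]) ++ R.inorder := by simp
      rw [this, show L.inorder.length + 1 = (L.inorder ++ [r]).length by simp]
      exact List.drop_left
    rw [htake, hdrop, getD_append_cons, ihL hDL hSL, ihR hDR hSR]

/-- the in-order map `α` is a bijection from endotrees of size `n`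
to endofunctions on `[n]`, with inverse the max-decomposition map `β`; in
particular the number of endotrees of size `n` is `n ^ n`. -/
theorem inorder_bijOn (n : ℕ) :
    Set.BijOn LTree.inorder {T : LTree | T.IsEndotree ∧ T.size = n}
      {x : List ℕ | IsEndofun x ∧ x.length = n} ∧
    (∀ T : LTree, T.IsEndotree → seqToTree T.inorder = T) ∧
    (∀ x : List ℕ, IsEndofun x → (seqToTree x).inorder = x) ∧
    {T : LTree | T.IsEndotree ∧ T.size = n}.ncard = n ^ n := by
  have hbeta : ∀ T : LTree, T.IsEndotree → seqToTree T.inorder = T := fun T hT =>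
    seqToTree_inorder T hT.1 hT.2.1
  have halpha : ∀ x : List ℕ, IsEndofun x → (seqToTree x).inorder = x := fun x _ =>
    inorder_seqToTree x
  have hbij : Set.BijOn LTree.inorder {T : LTree | T.IsEndotree ∧ T.size = n}
      {x : List ℕ | IsEndofun x ∧ x.length = n} := by
    refine ⟨?_, ?_, ?_⟩
    · rintro T ⟨⟨hD, hS, hlab⟩, hsz⟩
      refine ⟨fun a ha => ?_, ?_⟩
      · obtain ⟨h1, h2⟩ := hlab a ha
        exact ⟨h1, by rwa [← LTree.size_eq]⟩
      · rw [← LTree.size_eq, hsz]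
    · rintro T1 h1 T2 h2 heq
      rw [← hbeta T1 h1.1, heq, hbeta T2 h2.1]
    · rintro x ⟨hx, hlen⟩
      have hpos : ∀ a ∈ x, 1 ≤ a := fun a ha => (hx a ha).1
      obtain ⟨hD, hS⟩ := seqToTree_good x hpos
      have hsz : (seqToTree x).size = x.length := by
        rw [LTree.size_eq, inorder_seqToTree]
      refine ⟨seqToTree x, ⟨⟨hD, hS, ?_⟩, by rw [hsz, hlen]⟩, inorder_seqToTree x⟩
      intro l hl
      rw [inorder_seqToTree] at hl
      obtain ⟨h1, h2⟩ := hx l hl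
      exact ⟨h1, by rwa [hsz]⟩
  refine ⟨hbij, hbeta, halpha, ?_⟩
  -- counting
  set f : (Fin n → Fin n) → List ℕ := fun g => List.ofFn (fun i => (g i : ℕ) + 1) with hf
  have himg : {x : List ℕ | IsEndofun x ∧ x.length = n} = f '' Set.univ := by
    ext x
    simp only [Set.mem_setOf_eq, Set.image_univ, Set.mem_range]
    constructor
    · rintro ⟨hx, rfl⟩
      refine ⟨fun i => ⟨x[(i : ℕ)] - 1, ?_⟩, ?_⟩
      · have := hx _ (List.getElem_mem i.isLt)
        omega
      · apply List.ext_getElem (by simp [hf])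
        intro i h1 h2
        simp only [hf, List.getElem_ofFn]
        have := hx _ (List.getElem_mem h2)
        omega
    · rintro ⟨g, rfl⟩
      constructor
      · intro a ha
        rw [hf, List.mem_ofFn] at ha
        obtain ⟨i, rfl⟩ := ha
        have := (g i).isLt
        simp only [hf, List.length_ofFn]
        omega
      · simp [hf]
  have hinjf : Function.Injective f := by
    intro g g' h
    have h2 := List.ofFn_inj.mp h
    funext i
    have := congrFun h2 i
    ext
    omega
  have h1 : {T : LTree | T.IsEndotree ∧ T.size = n}.ncard
      = {x : List ℕ | IsEndofun x ∧ x.length = n}.ncard := by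
    rw [← hbij.image_eq, Set.ncard_image_of_injOn hbij.injOn]
  rw [h1, himg, Set.ncard_image_of_injective _ hinjf, Set.ncard_univ,
    Nat.card_eq_fintype_card]
  rw [Fintype.card_fun, Fintype.card_fin]
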